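/- arXiv:1210.4523 — 2 statements merged into one kernel-verified Lean document; each statement's English description precedes it below -/
import Mathlib

section
/- Let Δ ⊆ ℝⁿ be a nonempty polyhedron (finite intersection of closed half-spaces) and u a linear functional. Then inf_{x∈Δ} u(x) > −∞ if and only if u is nonnegative on the tail cone tail(Δ) = {a | a + Δ ⊆ Δ}. -/
def tailConeR {n : ℕ} (Δ : Set (Fin n → ℝ)) : Set (Fin n → ℝ) :=
  {a | ∀ x ∈ Δ, a + x ∈ Δ}

/-- Algebraic Farkas lemma, by induction on the number of functionals. -/
theorem farkas_aux {E : Type*} [AddCommGroup E] [Module ℝ E] :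
    ∀ (m : ℕ) (v : Fin m → (E →ₗ[ℝ] ℝ)) (u : E →ₗ[ℝ] ℝ),
      (∀ a, (∀ i, 0 ≤ v i a) → 0 ≤ u a) →
      ∃ y : Fin m → ℝ, (∀ i, 0 ≤ y i) ∧ u = ∑ i, y i • v i := by
  intro m
  induction m with
  | zero =>
    intro v u h
    refine ⟨0, fun i => le_rfl, ?_⟩
    have hu : ∀ a, u a = 0 := by
      intro a
      have h1 : 0 ≤ u a := h a (fun i => i.elim0)
      have h2 : 0 ≤ u (-a) := h (-a) (fun i => i.elim0)
      rw [map_neg] at h2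
      linarith
    ext a
    simp [hu a]
  | succ m ih =>
    intro v u h
    by_cases hc : ∀ a, (∀ i : Fin m, 0 ≤ v i.castSucc a) → 0 ≤ u a
    · obtain ⟨y, hy, hu⟩ := ih (fun i => v i.castSucc) u hc
      refine ⟨Fin.snoc y 0, ?_, ?_⟩
      · intro i
        refine Fin.lastCases ?_ ?_ i
        · simp
        · intro j; simpa using hy j
      · rw [hu, Fin.sum_univ_castSucc]
        simp
    · push_neg at hc
      obtain ⟨a₀, ha₀, ha₀u⟩ := hc
      have hlast : v (Fin.last m) a₀ < 0 := by
        by_contra h'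
        push_neg at h'
        refine absurd (h a₀ ?_) (not_le.mpr ha₀u)
        intro i
        refine Fin.lastCases h' (fun j => ha₀ j) i
      set t : ℝ := v (Fin.last m) a₀ with ht
      have ht0 : t ≠ 0 := ne_of_lt hlast
      set u' : E →ₗ[ℝ] ℝ := u - (u a₀ / t) • v (Fin.last m) with hu'
      set v' : Fin m → (E →ₗ[ℝ] ℝ) :=
        fun i => v i.castSucc - (v i.castSucc a₀ / t) • v (Fin.last m) with hv'
      have hkey : ∀ a, (∀ i, 0 ≤ v' i a) → 0 ≤ u' a := by
        intro a ha
        set abar : E := a - (v (Fin.last m) a / t) • a₀ with habar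
        have hwabar : ∀ w : E →ₗ[ℝ] ℝ, w abar = w a - v (Fin.last m) a / t * w a₀ := by
          intro w; simp [habar, map_sub, map_smul, smul_eq_mul]
        have hlabar : v (Fin.last m) abar = 0 := by
          rw [hwabar]; field_simp
          rw [← ht]; ring
        have hub : 0 ≤ u abar := by
          refine h abar ?_
          intro i
          refine Fin.lastCases (le_of_eq hlabar.symm) (fun j => ?_) i
          have h3 := ha j
          simp only [hv', LinearMap.sub_apply, LinearMap.smul_apply, smul_eq_mul] at h3
          rw [hwabar]
          have heq : (v j.castSucc) a₀ / t * (v (Fin.last m)) a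
              = (v (Fin.last m)) a / t * (v j.castSucc) a₀ := by ring
          linarith
        have : u abar = u' a := by
          rw [hwabar]
          simp [hu', map_sub, map_smul, smul_eq_mul]
          ring
        linarith [hub, this.symm.le]
      obtain ⟨y, hy, huv⟩ := ih v' u' hkey
      set μ : ℝ := u a₀ / t with hμ
      have hμpos : 0 < μ := div_pos_of_neg_of_neg ha₀u hlast
      set Y : Fin (m + 1) → ℝ :=
        Fin.snoc y (μ - ∑ i, y i * (v i.castSucc a₀ / t)) with hY
      refine ⟨Y, ?_, ?_⟩
      · intro i
        refine Fin.lastCases ?_ (fun j => ?_) i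
        · have hsum : ∑ i, y i * (v i.castSucc a₀ / t) ≤ 0 := by
            refine Finset.sum_nonpos (fun i _ => ?_)
            have h1 : 0 ≤ v i.castSucc a₀ := ha₀ i
            have h2 : v i.castSucc a₀ / t ≤ 0 := div_nonpos_of_nonneg_of_nonpos h1 hlast.le
            exact mul_nonpos_of_nonneg_of_nonpos (hy i) h2
          simp only [hY, Fin.snoc_last]
          linarith
        · simpa [hY] using hy j
      · have hexp : ∑ i, y i • v' i
            = (∑ i : Fin m, y i • v i.castSucc)
              - (∑ i : Fin m, y i * (v i.castSucc a₀ / t)) • v (Fin.last m) := by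
          simp [hv', smul_sub, Finset.sum_sub_distrib, smul_smul, Finset.sum_smul]
        have hu2 : u = u' + μ • v (Fin.last m) := by
          simp [hu', hμ]
        rw [hu2, huv, hexp, Fin.sum_univ_castSucc]
        simp only [hY, Fin.snoc_last, Fin.snoc_castSucc]
        module

theorem bddBelow_iff_nonneg_on_tailCone {n : ℕ} {ι : Type*} [Fintype ι]
    (f : ι → ((Fin n → ℝ) →ₗ[ℝ] ℝ)) (c : ι → ℝ)
    (Δ : Set (Fin n → ℝ)) (hΔ : Δ = {x | ∀ i, c i ≤ f i x})
    (hne : Δ.Nonempty) (u : (Fin n → ℝ) →ₗ[ℝ] ℝ) :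
    BddBelow (u '' Δ) ↔ ∀ a ∈ tailConeR Δ, 0 ≤ u a := by
  constructor
  · rintro ⟨b, hb⟩ a ha
    by_contra hua
    push_neg at hua
    obtain ⟨x₀, hx₀⟩ := hne
    have hmem : ∀ k : ℕ, (k : ℝ) • a + x₀ ∈ Δ := by
      intro k
      induction k with
      | zero => simpa using hx₀
      | succ k ihk =>
        have := ha _ ihk
        have heq : ((k : ℝ) + 1) • a + x₀ = a + ((k : ℝ) • a + x₀) := by
          rw [add_smul, one_smul]; abel
        rw [show ((k + 1 : ℕ) : ℝ) = (k : ℝ) + 1 by push_cast; ring, heq]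
        exact this
    obtain ⟨k, hk⟩ := exists_nat_gt ((u x₀ - b) / (-u a))
    have hbk : b ≤ u ((k : ℝ) • a + x₀) := hb ⟨_, hmem k, rfl⟩
    rw [map_add, map_smul, smul_eq_mul] at hbk
    have hlt : (u x₀ - b) / (-u a) < k := hk
    rw [div_lt_iff₀ (by linarith : (0:ℝ) < -u a)] at hlt
    nlinarith
  · intro htail
    let e := Fintype.equivFin ι
    set v : Fin (Fintype.card ι) → ((Fin n → ℝ) →ₗ[ℝ] ℝ) := fun i => f (e.symm i) with hv
    have hfar : ∀ a, (∀ i, 0 ≤ v i a) → 0 ≤ u a := by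
      intro a haa
      refine htail a ?_
      intro x hx
      rw [hΔ] at hx ⊢
      intro i
      have h1 : 0 ≤ f i a := by
        have := haa (e i); simpa [hv] using this
      have h2 := hx i
      simp only [Set.mem_setOf_eq, map_add]
      linarith
    obtain ⟨y, hy, huv⟩ := farkas_aux (Fintype.card ι) v u hfar
    refine ⟨∑ i, y i * c (e.symm i), ?_⟩
    rintro r ⟨x, hx, rfl⟩
    rw [huv]
    simp only [LinearMap.sum_apply, LinearMap.smul_apply, smul_eq_mul]
    refine Finset.sum_le_sum (fun i _ => ?_)
    have : c (e.symm i) ≤ v i x := by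
      rw [hΔ] at hx; exact hx (e.symm i)
    exact mul_le_mul_of_nonneg_left this (hy i)
end

section
/- Let Δ ⊆ ℝⁿ be a nonempty polyhedron with tail cone σ, and suppose u is a linear functional lying in the interior of the dual cone σ∨ (i.e., u > 0 on σ \ {0}). Then the infimum inf_{x∈Δ} u(x) is attained at some point of Δ. -/
theorem inf_attained_of_interior_dual {n : ℕ} {ι : Type*} [Fintype ι]
    (f : ι → ((Fin n → ℝ) →ₗ[ℝ] ℝ)) (c : ι → ℝ)
    (Δ : Set (Fin n → ℝ)) (hΔ : Δ = {x | ∀ i, c i ≤ f i x})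
    (hne : Δ.Nonempty) (u : (Fin n → ℝ) →ₗ[ℝ] ℝ)
    (hu : ∀ a ∈ tailConeR Δ, a ≠ 0 → 0 < u a) :
    ∃ x ∈ Δ, ∀ y ∈ Δ, u x ≤ u y := by
  classical
  obtain ⟨x₀, hx₀⟩ := hne
  have hcont : ∀ (g : (Fin n → ℝ) →ₗ[ℝ] ℝ), Continuous g :=
    fun g => g.continuous_of_finiteDimensional
  set K : Set (Fin n → ℝ) := {x | x ∈ Δ ∧ u x ≤ u x₀} with hK
  have hKclosed : IsClosed K := by
    have hEq : K = (⋂ i, {x | c i ≤ f i x}) ∩ {x | u x ≤ u x₀} := by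
      ext x
      simp [hK, hΔ, Set.mem_iInter]
    rw [hEq]
    exact (isClosed_iInter fun i =>
      isClosed_le continuous_const (hcont (f i))).inter
      (isClosed_le (hcont u) continuous_const)
  have hKbdd : Bornology.IsBounded K := by
    by_contra hb
    rw [isBounded_iff_forall_norm_le] at hb
    push_neg at hb
    choose x hxK hxn using fun k : ℕ => hb (k : ℝ)
    have hpos : ∀ k, 0 < ‖x k‖ := fun k =>
      lt_of_le_of_lt (Nat.cast_nonneg k) (hxn k)
    have hxtop : Filter.Tendsto (fun k => ‖x k‖) Filter.atTop Filter.atTop :=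
      Filter.tendsto_atTop_mono (fun k => (hxn k).le) tendsto_natCast_atTop_atTop
    have hinv0 : Filter.Tendsto (fun k => ‖x k‖⁻¹) Filter.atTop (nhds 0) :=
      Filter.Tendsto.inv_tendsto_atTop hxtop
    set y : ℕ → (Fin n → ℝ) := fun k => ‖x k‖⁻¹ • x k with hy
    have hysphere : ∀ k, y k ∈ Metric.sphere (0 : Fin n → ℝ) 1 := by
      intro k
      rw [mem_sphere_zero_iff_norm, hy]
      simp [norm_smul, abs_of_pos (inv_pos.2 (hpos k)),
        inv_mul_cancel₀ (hpos k).ne']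
    obtain ⟨a, ha_mem, φ, hφ, hconv⟩ :=
      (isCompact_sphere (0 : Fin n → ℝ) 1).tendsto_subseq hysphere
    have hna : a ≠ 0 := by
      intro h
      have := mem_sphere_zero_iff_norm.1 ha_mem
      simp [h] at this
    have hinv0' : Filter.Tendsto (fun k => ‖x (φ k)‖⁻¹) Filter.atTop (nhds 0) :=
      hinv0.comp hφ.tendsto_atTop
    have hyval : ∀ (g : (Fin n → ℝ) →ₗ[ℝ] ℝ) k, g (y k) = ‖x k‖⁻¹ * g (x k) := by
      intro g k
      rw [hy]
      simp
    have hfa : ∀ i, 0 ≤ f i a := by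
      intro i
      have h1 : Filter.Tendsto (fun k => f i (y (φ k))) Filter.atTop (nhds (f i a)) :=
        ((hcont (f i)).tendsto a).comp hconv
      have h2 : Filter.Tendsto (fun k => ‖x (φ k)‖⁻¹ * c i) Filter.atTop (nhds 0) := by
        simpa using hinv0'.mul_const (c i)
      refine le_of_tendsto_of_tendsto h2 h1 ?_
      filter_upwards with k
      have hx' := (hxK (φ k)).1
      rw [hΔ] at hx'
      rw [hyval]
      exact mul_le_mul_of_nonneg_left (hx' i) (inv_nonneg.2 (hpos _).le)
    have hua : u a ≤ 0 := by
      have h1 : Filter.Tendsto (fun k => u (y (φ k))) Filter.atTop (nhds (u a)) :=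
        ((hcont u).tendsto a).comp hconv
      have h2 : Filter.Tendsto (fun k => ‖x (φ k)‖⁻¹ * u x₀) Filter.atTop (nhds 0) := by
        simpa using hinv0'.mul_const (u x₀)
      refine le_of_tendsto_of_tendsto h1 h2 ?_
      filter_upwards with k
      rw [hyval]
      exact mul_le_mul_of_nonneg_left (hxK (φ k)).2 (inv_nonneg.2 (hpos _).le)
    have hatail : a ∈ tailConeR Δ := by
      intro z hz
      rw [hΔ] at hz ⊢
      intro i
      have h1 := hz i
      have h2 := hfa i
      have h3 : f i (a + z) = f i a + f i z := map_add _ _ _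
      linarith
    exact absurd (hu a hatail hna) (not_lt.2 hua)
  have hKne : K.Nonempty := ⟨x₀, hx₀, le_refl _⟩
  have hKcomp : IsCompact K := Metric.isCompact_of_isClosed_isBounded hKclosed hKbdd
  obtain ⟨z, hzK, hmin⟩ := hKcomp.exists_isMinOn hKne ((hcont u).continuousOn)
  refine ⟨z, hzK.1, fun w hw => ?_⟩
  by_cases h : u w ≤ u x₀
  · exact hmin ⟨hw, h⟩
  · have hzx₀ : u z ≤ u x₀ := hmin ⟨hx₀, le_refl _⟩
    linarith
end
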